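/- There exist constants δ > 0 and D > 0 such that for all ε > 0, t > 0 and x ∈ ℝ with 0 < ε/t ≤ δ, one has ∫_ℝ |R_ε(t,x,y) − G(t,x,y)| dy ≤ e^{−t/ε} + D·(ε/t)^{1/3}. -/

import Mathlib

/-!
With the Poisson weights `p n = e^{-λ} λ^n / n!`, `λ = t/ε`, and the convention `G(0,·,·) = 0`,
`R_ε(t,x,·) - G(t,x,·) = ∑ₙ p n (G(nε,x,·) - G(t,x,·))`. The L¹ distance between two Gaussian
kernels is at most `2|s - t|/t`, so the integral is at most `(2/λ) ∑ₙ p n |n - λ|`. A mean absolute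
deviation is bounded by the standard deviation, which for the Poisson law is `√λ`; hence the
integral is at most `2 (ε/t)^{1/2} ≤ 2 (ε/t)^{1/3}` as soon as `ε ≤ t`.
-/

open MeasureTheory Real

/-- The Gaussian heat kernel `G(t,x,y) = (2πt)^{-1/2} exp(-(x-y)²/(2t))` for `t > 0`,
and `0` for `t ≤ 0`. -/
noncomputable def heatKernel (t x y : ℝ) : ℝ :=
  if 0 < t then (1 / Real.sqrt (2 * Real.pi * t)) * Real.exp (-(x - y) ^ 2 / (2 * t)) else 0

/-- `R_ε(t,x,y) = e^{-t/ε} ∑_{n=1}^∞ ((t/ε)^n / n!) G(nε, x, y)`. -/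
noncomputable def Reps (ε t x y : ℝ) : ℝ :=
  Real.exp (-t / ε) *
    ∑' n : ℕ, ((t / ε) ^ (n + 1) / (Nat.factorial (n + 1) : ℝ)) *
      heatKernel (((n : ℝ) + 1) * ε) x y

open ProbabilityTheory
open scoped Nat

theorem integral_norm_tsum_le {α ι E : Type*} [MeasurableSpace α] {μ : Measure α} [Countable ι]
    [NormedAddCommGroup E] {F : ι → α → E} (hF : ∀ i, Integrable (F i) μ)
    (hsum : Summable fun i ↦ ∫ a, ‖F i a‖ ∂μ) :
    ∫ a, ‖∑' i, F i a‖ ∂μ ≤ ∑' i, ∫ a, ‖F i a‖ ∂μ := by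
  have hnonneg (i : ι) : 0 ≤ ∫ a, ‖F i a‖ ∂μ := integral_nonneg fun a ↦ norm_nonneg _
  rw [← ENNReal.ofReal_le_ofReal_iff (tsum_nonneg hnonneg)]
  calc ENNReal.ofReal (∫ a, ‖∑' i, F i a‖ ∂μ)
      = ‖∫ a, ‖∑' i, F i a‖ ∂μ‖ₑ :=
        (Real.enorm_of_nonneg (integral_nonneg fun a ↦ norm_nonneg _)).symm
    _ ≤ ∫⁻ a, ‖∑' i, F i a‖ₑ ∂μ := by
        simpa only [enorm_norm] using
          enorm_integral_le_lintegral_enorm (μ := μ) fun a ↦ ‖∑' i, F i a‖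
    _ ≤ ∫⁻ a, ∑' i, ‖F i a‖ₑ ∂μ := lintegral_mono fun a ↦ enorm_tsum_le_tsum_enorm
    _ = ∑' i, ∫⁻ a, ‖F i a‖ₑ ∂μ := lintegral_tsum fun i ↦ (hF i).aestronglyMeasurable.enorm
    _ = ∑' i, ENNReal.ofReal (∫ a, ‖F i a‖ ∂μ) := by
        simp_rw [ofReal_integral_norm_eq_lintegral_enorm (hF _)]
    _ = ENNReal.ofReal (∑' i, ∫ a, ‖F i a‖ ∂μ) := (ENNReal.ofReal_tsum_of_nonneg hnonneg hsum).symm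

theorem summable_abs_mul_of_summable_sq_mul {ι : Type*} {w f : ι → ℝ} (hw : ∀ i, 0 ≤ w i)
    (hw1 : Summable w) (hf : Summable fun i ↦ f i ^ 2 * w i) :
    Summable fun i ↦ |f i| * w i :=
  (hf.add hw1).of_nonneg_of_le (fun i ↦ mul_nonneg (abs_nonneg _) (hw i)) fun i ↦ by
    have : |f i| ≤ f i ^ 2 + 1 := by nlinarith [sq_abs (f i), abs_nonneg (f i)]
    nlinarith [hw i]

theorem tsum_abs_mul_le_sqrt {ι : Type*} {w f : ι → ℝ} {v : ℝ} (hw : ∀ i, 0 ≤ w i)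
    (hw1 : HasSum w 1) (hv : HasSum (fun i ↦ f i ^ 2 * w i) v) (hv0 : 0 < v) :
    ∑' i, |f i| * w i ≤ √v := by
  -- AM-GM: `2 |f| √v ≤ f² + v`
  have hamgm (i : ι) : |f i| * w i ≤ (f i ^ 2 * w i + v * w i) / (2 * √v) := by
    rw [le_div_iff₀ (by positivity)]
    have := two_mul_le_add_sq |f i| √v
    rw [sq_abs, sq_sqrt hv0.le] at this
    nlinarith [hw i]
  have hrhs : HasSum (fun i ↦ (f i ^ 2 * w i + v * w i) / (2 * √v)) ((v + v * 1) / (2 * √v)) :=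
    (hv.add (hw1.mul_left v)).div_const _
  calc ∑' i, |f i| * w i ≤ (v + v * 1) / (2 * √v) :=
        hasSum_le hamgm
          (summable_abs_mul_of_summable_sq_mul hw hw1.summable hv.summable).hasSum hrhs
    _ = √v := by
        rw [mul_one, ← two_mul, mul_div_mul_left _ _ two_ne_zero, div_sqrt]

noncomputable def poissonWeight (r : ℝ) (n : ℕ) : ℝ := exp (-r) * r ^ n / n !

theorem poissonWeight_nonneg {r : ℝ} (hr : 0 ≤ r) (n : ℕ) : 0 ≤ poissonWeight r n := by
  unfold poissonWeight; positivity

theorem hasSum_poissonWeight (r : ℝ) : HasSum (poissonWeight r) 1 := by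
  have hexp := (NormedSpace.expSeries_div_hasSum_exp r).mul_left (exp (-r))
  rwa [← exp_eq_exp_ℝ, ← exp_add, neg_add_cancel, exp_zero, ← funext_iff.2 fun n ↦
    (mul_div_assoc (exp (-r)) (r ^ n) (n ! : ℝ))] at hexp

theorem succ_mul_poissonWeight_succ (r : ℝ) (n : ℕ) :
    (n + 1) * poissonWeight r (n + 1) = r * poissonWeight r n := by
  simp only [poissonWeight, Nat.factorial_succ, Nat.cast_mul, Nat.cast_succ, pow_succ]
  field_simp

theorem hasSum_mul_poissonWeight (r : ℝ) : HasSum (fun n : ℕ ↦ n * poissonWeight r n) r := by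
  rw [← hasSum_nat_add_iff' 1]
  have hshift : (fun n : ℕ ↦ ((n + 1 : ℕ) : ℝ) * poissonWeight r (n + 1))
      = fun n ↦ r * poissonWeight r n := by
    ext n
    push_cast
    exact succ_mul_poissonWeight_succ r n
  rw [hshift]
  simpa using (hasSum_poissonWeight r).mul_left r

theorem hasSum_mul_sub_one_mul_poissonWeight (r : ℝ) :
    HasSum (fun n : ℕ ↦ n * (n - 1) * poissonWeight r n) (r ^ 2) := by
  rw [← hasSum_nat_add_iff' 2]
  have hshift : (fun n : ℕ ↦ ((n + 2 : ℕ) : ℝ) * ((n + 2 : ℕ) - 1) * poissonWeight r (n + 2))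
      = fun n ↦ r ^ 2 * poissonWeight r n := by
    ext n
    have h1 := succ_mul_poissonWeight_succ r (n + 1)
    have h2 := succ_mul_poissonWeight_succ r n
    push_cast at h1 ⊢
    linear_combination (n + 1 : ℝ) * h1 + r * h2
  rw [hshift]
  simpa [Finset.sum_range_succ] using (hasSum_poissonWeight r).mul_left (r ^ 2)

theorem hasSum_sq_sub_mul_poissonWeight (r : ℝ) :
    HasSum (fun n : ℕ ↦ (n - r) ^ 2 * poissonWeight r n) r := by
  -- `(n - r)² = n (n - 1) + (1 - 2r) n + r²`
  have := ((hasSum_mul_sub_one_mul_poissonWeight r).add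
    ((hasSum_mul_poissonWeight r).mul_left (1 - 2 * r))).add
    ((hasSum_poissonWeight r).mul_left (r ^ 2))
  convert this using 1
  · ext n; ring
  · ring

theorem heatKernel_eq_gaussianPDFReal (t x : ℝ) :
    heatKernel t x = gaussianPDFReal x t.toNNReal := by
  ext y
  rcases le_or_gt t 0 with ht | ht
  · simp [heatKernel, ht.not_gt, Real.toNNReal_of_nonpos ht]
  · rw [heatKernel, if_pos ht, gaussianPDFReal, Real.coe_toNNReal _ ht.le, one_div, ← neg_sub y x,
      neg_sq]

theorem heatKernel_of_nonpos {t : ℝ} (ht : t ≤ 0) (x y : ℝ) : heatKernel t x y = 0 := by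
  simp [heatKernel, ht.not_gt]

theorem heatKernel_nonneg (t x y : ℝ) : 0 ≤ heatKernel t x y := by
  rw [heatKernel_eq_gaussianPDFReal]; exact gaussianPDFReal_nonneg _ _ _

theorem integrable_heatKernel (t x : ℝ) : Integrable (heatKernel t x) := by
  rw [heatKernel_eq_gaussianPDFReal]; exact integrable_gaussianPDFReal _ _

theorem integral_heatKernel {t : ℝ} (ht : 0 < t) (x : ℝ) : ∫ y, heatKernel t x y = 1 := by
  rw [heatKernel_eq_gaussianPDFReal]
  exact integral_gaussianPDFReal_eq_one _ (by simpa using ht)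

theorem heatKernel_le_of_le {ε s : ℝ} (hε : 0 < ε) (hs : ε ≤ s) (x y : ℝ) :
    heatKernel s x y ≤ (√(2 * π * ε))⁻¹ := by
  rw [heatKernel, if_pos (hε.trans_le hs), one_div]
  calc (√(2 * π * s))⁻¹ * exp (-(x - y) ^ 2 / (2 * s)) ≤ (√(2 * π * s))⁻¹ * 1 := by
        gcongr
        exact exp_le_one_iff.2 (div_nonpos_of_nonpos_of_nonneg (by nlinarith [sq_nonneg (x - y)])
          (by linarith))
    _ ≤ (√(2 * π * ε))⁻¹ := by
        rw [mul_one]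
        gcongr

theorem sqrt_div_mul_heatKernel_le {s t : ℝ} (hs : 0 < s) (hst : s ≤ t) (x y : ℝ) :
    √(s / t) * heatKernel s x y ≤ heatKernel t x y := by
  have ht := hs.trans_le hst
  have hprefactor : √(s / t) * (√(2 * π * s))⁻¹ = (√(2 * π * t))⁻¹ := by
    rw [show 2 * π * s = 2 * π * t * (s / t) by field_simp, sqrt_mul (by positivity), mul_inv,
      mul_left_comm, mul_inv_cancel₀ (by positivity), mul_one]
  rw [heatKernel, heatKernel, if_pos hs, if_pos ht, one_div, one_div, ← mul_assoc, hprefactor]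
  refine mul_le_mul_of_nonneg_left (exp_le_exp.2 ?_) (by positivity)
  rw [neg_div, neg_div, neg_le_neg_iff]
  gcongr

theorem integral_abs_heatKernel_sub_le_of_le {s t : ℝ} (hs : 0 < s) (hst : s ≤ t) (x : ℝ) :
    ∫ y, |heatKernel s x y - heatKernel t x y| ≤ 2 * (1 - √(s / t)) := by
  have ht := hs.trans_le hst
  have hsqrt_le_one : √(s / t) ≤ 1 := sqrt_le_one.2 ((div_le_one ht).2 hst)
  -- `|a - b| = a + b - 2 min a b`, and `min (G s) (G t) ≥ √(s/t) G s`
  have hpointwise (y : ℝ) : |heatKernel s x y - heatKernel t x y|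
      ≤ heatKernel s x y + heatKernel t x y - 2 * √(s / t) * heatKernel s x y := by
    have h1 := sqrt_div_mul_heatKernel_le hs hst x y
    have h2 : √(s / t) * heatKernel s x y ≤ heatKernel s x y :=
      mul_le_of_le_one_left (heatKernel_nonneg s x y) hsqrt_le_one
    rw [abs_le]; constructor <;> linarith
  have hGs := integrable_heatKernel s x
  have hGt := integrable_heatKernel t x
  calc ∫ y, |heatKernel s x y - heatKernel t x y|
      ≤ ∫ y, (heatKernel s x y + heatKernel t x y - 2 * √(s / t) * heatKernel s x y) :=
        integral_mono (hGs.sub hGt).abs ((hGs.add hGt).sub (hGs.const_mul _)) hpointwise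
    _ = 2 * (1 - √(s / t)) := by
        rw [integral_sub (f := fun y ↦ heatKernel s x y + heatKernel t x y) (hGs.add hGt)
          (hGs.const_mul _), integral_add hGs hGt, integral_const_mul,
          integral_heatKernel hs, integral_heatKernel ht]
        ring

theorem integral_abs_heatKernel_sub_le (s : ℝ) {t : ℝ} (ht : 0 < t) (x : ℝ) :
    ∫ y, |heatKernel s x y - heatKernel t x y| ≤ 2 * |s - t| / t := by
  rcases le_or_gt s 0 with hs | hs
  · simp_rw [heatKernel_of_nonpos hs, zero_sub, abs_neg, abs_of_nonneg (heatKernel_nonneg t x _),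
      integral_heatKernel ht, abs_of_nonpos (by linarith : s - t ≤ 0)]
    rw [le_div_iff₀ ht]
    linarith
  have hsqrt {u : ℝ} (hu0 : 0 ≤ u) (hu1 : u ≤ 1) : u ≤ √u :=
    (le_sqrt hu0 hu0).2 (by nlinarith)
  rcases le_or_gt s t with hst | hts
  · calc _ ≤ 2 * (1 - √(s / t)) := integral_abs_heatKernel_sub_le_of_le hs hst x
      _ ≤ 2 * (1 - s / t) := by gcongr; exact hsqrt (by positivity) ((div_le_one ht).2 hst)
      _ = 2 * |s - t| / t := by rw [abs_of_nonpos (by linarith)]; field_simp; ring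
  · calc _ = ∫ y, |heatKernel t x y - heatKernel s x y| := by simp_rw [abs_sub_comm]
      _ ≤ 2 * (1 - √(t / s)) := integral_abs_heatKernel_sub_le_of_le ht hts.le x
      _ ≤ 2 * (1 - t / s) := by gcongr; exact hsqrt (by positivity) ((div_le_one hs).2 hts.le)
      _ = 2 * |s - t| / s := by rw [abs_of_pos (by linarith)]; field_simp
      _ ≤ 2 * |s - t| / t := by gcongr

theorem summable_poissonWeight_mul_heatKernel {ε r : ℝ} (hε : 0 < ε) (hr : 0 ≤ r) (x y : ℝ) :
    Summable fun n : ℕ ↦ poissonWeight r n * heatKernel (n * ε) x y := by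
  refine ((hasSum_poissonWeight r).summable.mul_right (√(2 * π * ε))⁻¹).of_nonneg_of_le
    (fun n ↦ mul_nonneg (poissonWeight_nonneg hr n) (heatKernel_nonneg _ x y)) fun n ↦ ?_
  refine mul_le_mul_of_nonneg_left ?_ (poissonWeight_nonneg hr n)
  rcases n with _ | n
  · rw [Nat.cast_zero, zero_mul, heatKernel_of_nonpos le_rfl]
    positivity
  · exact heatKernel_le_of_le hε (le_mul_of_one_le_left hε.le (by simp)) x y

theorem Reps_eq_tsum_poissonWeight_mul_heatKernel {ε t : ℝ} (hε : 0 < ε) (ht : 0 ≤ t) (x y : ℝ) :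
    Reps ε t x y = ∑' n : ℕ, poissonWeight (t / ε) n * heatKernel (n * ε) x y := by
  have hsum := summable_poissonWeight_mul_heatKernel hε (div_nonneg ht hε.le) x y
  rw [hsum.tsum_eq_zero_add, Nat.cast_zero, zero_mul, heatKernel_of_nonpos le_rfl, mul_zero,
    zero_add, Reps, ← tsum_mul_left]
  congr 1 with n
  rw [poissonWeight, neg_div]
  push_cast
  ring

theorem Reps_sub_heatKernel_eq_tsum {ε t : ℝ} (hε : 0 < ε) (ht : 0 ≤ t) (x y : ℝ) :
    Reps ε t x y - heatKernel t x y =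
      ∑' n : ℕ, poissonWeight (t / ε) n * (heatKernel (n * ε) x y - heatKernel t x y) := by
  simp_rw [mul_sub]
  rw [(summable_poissonWeight_mul_heatKernel hε (div_nonneg ht hε.le) x y).tsum_sub
    ((hasSum_poissonWeight _).summable.mul_right _), tsum_mul_right,
    (hasSum_poissonWeight _).tsum_eq, one_mul, Reps_eq_tsum_poissonWeight_mul_heatKernel hε ht]

theorem integral_abs_Reps_sub_heatKernel_le {ε t : ℝ} (hε : 0 < ε) (ht : 0 < t) (x : ℝ) :
    ∫ y, |Reps ε t x y - heatKernel t x y| ≤ 2 * √(ε / t) := by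
  set r := t / ε with hr_def
  have hr : 0 < r := div_pos ht hε
  have hw := poissonWeight_nonneg hr.le
  set F : ℕ → ℝ → ℝ := fun n y ↦ poissonWeight r n * (heatKernel (n * ε) x y - heatKernel t x y)
  have hF_int (n : ℕ) : Integrable (F n) :=
    ((integrable_heatKernel _ x).sub (integrable_heatKernel t x)).const_mul _
  have hF_le (n : ℕ) : ∫ y, ‖F n y‖ ≤ 2 / r * (|(n : ℝ) - r| * poissonWeight r n) := by
    have hscale : 2 * |n * ε - t| / t = 2 / r * |(n : ℝ) - r| := by
      rw [hr_def, show n * ε - t = (n - t / ε) * ε by field_simp, abs_mul, abs_of_pos hε]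
      field_simp
    simp only [F, norm_mul, Real.norm_eq_abs, abs_of_nonneg (hw n), integral_const_mul]
    calc poissonWeight r n * ∫ y, |heatKernel (n * ε) x y - heatKernel t x y|
        ≤ poissonWeight r n * (2 * |n * ε - t| / t) := by
          gcongr
          exacts [hw n, integral_abs_heatKernel_sub_le _ ht x]
      _ = 2 / r * (|(n : ℝ) - r| * poissonWeight r n) := by rw [hscale]; ring
  have hdev := summable_abs_mul_of_summable_sq_mul hw (hasSum_poissonWeight r).summable
    (hasSum_sq_sub_mul_poissonWeight r).summable
  have hsum : Summable fun n ↦ ∫ y, ‖F n y‖ :=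
    (hdev.mul_left _).of_nonneg_of_le (fun n ↦ integral_nonneg fun y ↦ norm_nonneg _) hF_le
  calc ∫ y, |Reps ε t x y - heatKernel t x y| = ∫ y, ‖∑' n, F n y‖ := by
        simp_rw [Reps_sub_heatKernel_eq_tsum hε ht.le, Real.norm_eq_abs, F, hr_def]
    _ ≤ ∑' n, ∫ y, ‖F n y‖ := integral_norm_tsum_le hF_int hsum
    _ ≤ ∑' n : ℕ, 2 / r * (|(n : ℝ) - r| * poissonWeight r n) :=
        hsum.tsum_le_tsum hF_le (hdev.mul_left _)
    _ = 2 / r * ∑' n : ℕ, |(n : ℝ) - r| * poissonWeight r n := tsum_mul_left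
    _ ≤ 2 / r * √r := by
        gcongr
        exact tsum_abs_mul_le_sqrt hw (hasSum_poissonWeight r)
          (hasSum_sq_sub_mul_poissonWeight r) hr
    _ = 2 * √(ε / t) := by
        rw [show ε / t = r⁻¹ by rw [hr_def, inv_div], sqrt_inv]
        field_simp
        rw [sq_sqrt hr.le]

/-- There exist `δ, D > 0` such that for all `ε > 0`, `t > 0` and `x ∈ ℝ` with
`ε/t ≤ δ` one has `∫_ℝ |R_ε(t,x,y) − G(t,x,y)| dy ≤ e^{-t/ε} + D (ε/t)^{1/3}`. -/
theorem Reps_sub_heatKernel_L1_bound :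
    ∃ δ > (0 : ℝ), ∃ D > (0 : ℝ), ∀ ε > (0 : ℝ), ∀ t > (0 : ℝ), ∀ x : ℝ,
      ε / t ≤ δ →
      (∫ y : ℝ, |Reps ε t x y - heatKernel t x y|) ≤
        Real.exp (-t / ε) + D * (ε / t) ^ ((1:ℝ)/3) := by
  refine ⟨1, one_pos, 2, two_pos, fun ε hε t ht x hεt ↦ ?_⟩
  calc ∫ y, |Reps ε t x y - heatKernel t x y| ≤ 2 * √(ε / t) :=
        integral_abs_Reps_sub_heatKernel_le hε ht x
    _ = 2 * (ε / t) ^ ((1 : ℝ) / 2) := by rw [sqrt_eq_rpow]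
    _ ≤ 2 * (ε / t) ^ ((1 : ℝ) / 3) := by
        gcongr 2 * ?_
        exact rpow_le_rpow_of_exponent_ge (div_pos hε ht) hεt (by norm_num)
    _ ≤ exp (-t / ε) + 2 * (ε / t) ^ ((1 : ℝ) / 3) := le_add_of_nonneg_left (exp_pos _).le
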